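/- arXiv:1602.04530 — 2 statements merged into one kernel-verified Lean document; each statement's English description precedes it below -/
import Mathlib

section
/- If p ◁ S is a partition of a condition p and s ≤ p is any extension of p, then s ◁ { s ∪ q | q ∈ S, q compatible with s }, i.e. the restriction of a partition to an extension is again a partition. -/
/-- A condition: (the graph of) a finite partial function `ℕ ⇀ Bool`,
represented as a finite set of pairs. -/
abbrev Cond : Type := Finset (ℕ × Bool)

/-- `p` is (the graph of) a partial function. -/
def IsFunc (p : Cond) : Prop := ∀ x ∈ p, ∀ y ∈ p, x.1 = y.1 → x.2 = y.2

instance (p : Cond) : Decidable (IsFunc p) := by unfold IsFunc; exact inferInstance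

/-- The domain of a condition. -/
def condDom (p : Cond) : Finset ℕ := p.image Prod.fst

/-- `condExt p n b` is `p(n ↦ b) = p ∪ {(n, b)}`. -/
def condExt (p : Cond) (n : ℕ) (b : Bool) : Cond := insert (n, b) p

/-- The partition relation `p ◁ S`. -/
inductive Partn : Cond → Finset Cond → Prop
  | refl (p : Cond) : Partn p {p}
  | split (p : Cond) (n : ℕ) (S₀ S₁ : Finset Cond) :
      n ∉ condDom p → Partn (condExt p n false) S₀ → Partn (condExt p n true) S₁ →
      Partn p (S₀ ∪ S₁)

lemma partn_subset {p : Cond} {S : Finset Cond} (h : Partn p S) : ∀ q ∈ S, p ⊆ q := by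
  induction h with
  | refl p => intro q hq; simp only [Finset.mem_singleton] at hq; subst hq; exact Finset.Subset.refl _
  | split p n S₀ S₁ hn h0 h1 ih0 ih1 =>
    intro q hq
    rcases Finset.mem_union.mp hq with h | h
    · exact (Finset.subset_insert _ _).trans (ih0 q h)
    · exact (Finset.subset_insert _ _).trans (ih1 q h)

lemma isfunc_subset {p q : Cond} (h : p ⊆ q) (hq : IsFunc q) : IsFunc p :=
  fun x hx y hy => hq x (h hx) y (h hy)

lemma isfunc_ext {p : Cond} (hp : IsFunc p) {n : ℕ} (hn : n ∉ condDom p) (b : Bool) :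
    IsFunc (condExt p n b) := by
  intro x hx y hy hxy
  simp only [condExt, Finset.mem_insert] at hx hy
  have hdom : ∀ z ∈ p, z.1 ≠ n := by
    intro z hz hzn
    exact hn (Finset.mem_image.mpr ⟨z, hz, hzn⟩)
  rcases hx with rfl | hx <;> rcases hy with rfl | hy
  · rfl
  · exact absurd hxy.symm (hdom y hy)
  · exact absurd hxy (hdom x hx)
  · exact hp x hx y hy hxy

lemma filter_eq_empty_of_mem {s : Cond} {p : Cond} {n : ℕ} {b b' : Bool} {S' : Finset Cond}
    (hb : (n, b) ∈ s) (hne : b ≠ b') (h : Partn (condExt p n b') S') :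
    S'.filter (fun q => IsFunc (s ∪ q)) = ∅ := by
  apply Finset.filter_eq_empty_iff.mpr
  intro q hq hfq
  have hq' : (n, b') ∈ q := partn_subset h q hq (Finset.mem_insert_self _ _)
  exact hne (hfq (n, b) (Finset.mem_union_left _ hb) (n, b') (Finset.mem_union_right _ hq') rfl)

/-- The restriction of a partition to an extension is again a partition:
if `p ◁ S` and `s ≤ p`, then `s ◁ { s ∪ q | q ∈ S, q compatible with s }`. -/
theorem stmt1 (p s : Cond) (S : Finset Cond) (hp : IsFunc p) (hs : IsFunc s)
    (hsp : p ⊆ s) (hS : Partn p S) :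
    Partn s ((S.filter fun q => IsFunc (s ∪ q)).image fun q => s ∪ q) := by
  induction hS generalizing s with
  | refl p =>
    have hsub : s ∪ p = s := Finset.union_eq_left.mpr hsp
    have hf : (({p} : Finset Cond).filter fun q => IsFunc (s ∪ q)) = {p} := by
      apply Finset.filter_eq_self.mpr
      intro q hq
      simp only [Finset.mem_singleton] at hq; subst hq
      rw [hsub]; exact hs
    rw [hf, Finset.image_singleton, hsub]
    exact Partn.refl s
  | split p n S₀ S₁ hn h0 h1 ih0 ih1 =>
    rw [Finset.filter_union, Finset.image_union]
    by_cases hns : n ∈ condDom s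
    · obtain ⟨⟨m, b⟩, hmem, hm⟩ := Finset.mem_image.mp hns
      simp only at hm; subst hm
      have hpb : ∀ b', condExt p m b' ⊆ s → IsFunc (condExt p m b') :=
        fun b' h => isfunc_subset h hs
      cases b with
      | false =>
        rw [filter_eq_empty_of_mem hmem (by simp) h1, Finset.image_empty, Finset.union_empty]
        have hsub : condExt p m false ⊆ s := Finset.insert_subset hmem hsp
        exact ih0 s (hpb false hsub) hs hsub
      | true =>
        rw [filter_eq_empty_of_mem hmem (by simp) h0, Finset.image_empty, Finset.empty_union]
        have hsub : condExt p m true ⊆ s := Finset.insert_subset hmem hsp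
        exact ih1 s (hpb true hsub) hs hsub
    · have key : ∀ (b : Bool) (S' : Finset Cond), Partn (condExt p n b) S' →
          (S'.filter fun q => IsFunc (s ∪ q)).image (fun q => s ∪ q) =
          (S'.filter fun q => IsFunc (condExt s n b ∪ q)).image (fun q => condExt s n b ∪ q) := by
        intro b S' hP
        have heq : ∀ q ∈ S', condExt s n b ∪ q = s ∪ q := by
          intro q hq
          have : (n, b) ∈ q := partn_subset hP q hq (Finset.mem_insert_self _ _)
          rw [condExt, Finset.insert_union, Finset.insert_eq_self.mpr (Finset.mem_union_right _ this)]
        have hfe : (S'.filter fun q => IsFunc (s ∪ q)) =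
            (S'.filter fun q => IsFunc (condExt s n b ∪ q)) :=
          Finset.filter_congr (fun q hq => by rw [heq q hq])
        rw [hfe]
        apply Finset.image_congr
        intro q hq
        have hq' : q ∈ S' := (Finset.mem_filter.mp hq).1
        exact (heq q hq').symm
      rw [key false S₀ h0, key true S₁ h1]
      refine Partn.split s n _ _ hns ?_ ?_
      · exact ih0 _ (isfunc_ext hp hn false) (isfunc_ext hs hns false)
          (Finset.insert_subset_insert _ hsp)
      · exact ih1 _ (isfunc_ext hp hn true) (isfunc_ext hs hns true)
          (Finset.insert_subset_insert _ hsp)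
end

section
/- If q ≤ p and t →_q u, then either t →_p u, or t has the form E[f m̄] for some evaluation context E and some m ∈ dom(q) \ dom(p). -/
/-- Terms of the untyped calculus, with a generic function symbol `gen` (the
symbol `f`), booleans, numerals built from `zero`/`suc`, pairs, λ, and the
recursors. -/
inductive Tm : Type
  | var : ℕ → Tm
  | lam : Tm → Tm
  | app : Tm → Tm → Tm
  | pair : Tm → Tm → Tm
  | fst : Tm → Tm
  | snd : Tm → Tm
  | zero : Tm
  | one : Tm
  | suc : Tm → Tm
  | gen : Tm
  | rec0 : Tm → Tm
  | rec1 : Tm → Tm → Tm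
  | rec2 : Tm → Tm → Tm → Tm
  | recN : Tm → Tm → Tm → Tm
  deriving DecidableEq

/-- The numeral `n̄ = Sⁿ 0`. -/
def numeral : ℕ → Tm
  | 0 => .zero
  | n + 1 => .suc (numeral n)

/-- Booleans as terms. -/
def ofBool : Bool → Tm
  | false => .zero
  | true => .one

/-- de Bruijn lifting of variables `≥ d`. -/
def lift (d : ℕ) : Tm → Tm
  | .var i => if i < d then .var i else .var (i + 1)
  | .lam t => .lam (lift (d + 1) t)
  | .app t u => .app (lift d t) (lift d u)
  | .pair t u => .pair (lift d t) (lift d u)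
  | .fst t => .fst (lift d t)
  | .snd t => .snd (lift d t)
  | .zero => .zero
  | .one => .one
  | .suc t => .suc (lift d t)
  | .gen => .gen
  | .rec0 C => .rec0 (lift (d + 1) C)
  | .rec1 C a => .rec1 (lift (d + 1) C) (lift d a)
  | .rec2 C a b => .rec2 (lift (d + 1) C) (lift d a) (lift d b)
  | .recN C a g => .recN (lift (d + 1) C) (lift d a) (lift d g)

/-- Capture-avoiding substitution `t[a/k]` (de Bruijn). -/
def subst : Tm → ℕ → Tm → Tm
  | .var i, k, a => if i < k then .var i else if i = k then a else .var (i - 1)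
  | .lam t, k, a => .lam (subst t (k + 1) (lift 0 a))
  | .app t u, k, a => .app (subst t k a) (subst u k a)
  | .pair t u, k, a => .pair (subst t k a) (subst u k a)
  | .fst t, k, a => .fst (subst t k a)
  | .snd t, k, a => .snd (subst t k a)
  | .zero, _, _ => .zero
  | .one, _, _ => .one
  | .suc t, k, a => .suc (subst t k a)
  | .gen, _, _ => .gen
  | .rec0 C, k, a => .rec0 (subst C (k + 1) (lift 0 a))
  | .rec1 C c, k, a => .rec1 (subst C (k + 1) (lift 0 a)) (subst c k a)
  | .rec2 C c0 c1, k, a => .rec2 (subst C (k + 1) (lift 0 a)) (subst c0 k a) (subst c1 k a)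
  | .recN C cz g, k, a => .recN (subst C (k + 1) (lift 0 a)) (subst cz k a) (subst g k a)

/-- The condition-free base reduction (β/ι). -/
inductive Step : Tm → Tm → Prop
  | beta (t a : Tm) : Step (.app (.lam t) a) (subst t 0 a)
  | fstPair (u v : Tm) : Step (.fst (.pair u v)) u
  | sndPair (u v : Tm) : Step (.snd (.pair u v)) v
  | rec1Zero (C c : Tm) : Step (.app (.rec1 C c) .zero) c
  | rec2Zero (C c0 c1 : Tm) : Step (.app (.rec2 C c0 c1) .zero) c0
  | rec2One (C c0 c1 : Tm) : Step (.app (.rec2 C c0 c1) .one) c1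
  | recNZero (C cz g : Tm) : Step (.app (.recN C cz g) .zero) cz
  | recNSuc (C cz g : Tm) (k : ℕ) :
      Step (.app (.recN C cz g) (.suc (numeral k)))
        (.app (.app g (numeral k)) (.app (.recN C cz g) (numeral k)))

/-- Evaluation contexts `E ::= [] | E u | E.1 | E.2 | S E | f E | rec … E`. -/
inductive Ctx : Type
  | hole : Ctx
  | appL : Ctx → Tm → Ctx
  | fst : Ctx → Ctx
  | snd : Ctx → Ctx
  | suc : Ctx → Ctx
  | genApp : Ctx → Ctx
  | rec0Arg : Tm → Ctx → Ctx
  | rec1Arg : Tm → Tm → Ctx → Ctx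
  | rec2Arg : Tm → Tm → Tm → Ctx → Ctx
  | recNArg : Tm → Tm → Tm → Ctx → Ctx

/-- Plugging a term into the hole of an evaluation context. -/
def Ctx.fill : Ctx → Tm → Tm
  | .hole, e => e
  | .appL E u, e => .app (E.fill e) u
  | .fst E, e => .fst (E.fill e)
  | .snd E, e => .snd (E.fill e)
  | .suc E, e => .suc (E.fill e)
  | .genApp E, e => .app .gen (E.fill e)
  | .rec0Arg C E, e => .app (.rec0 C) (E.fill e)
  | .rec1Arg C a E, e => .app (.rec1 C a) (E.fill e)
  | .rec2Arg C a b E, e => .app (.rec2 C a b) (E.fill e)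
  | .recNArg C cz g E, e => .app (.recN C cz g) (E.fill e)

/-- The condition-indexed one-step reduction `t →_p u`: generated by the base
reduction, the rule `f k̄ →_p p(k)` for `k ∈ dom p`, and closure under
evaluation contexts. -/
inductive Red (p : Cond) : Tm → Tm → Prop
  | base {t u : Tm} : Step t u → Red p t u
  | genRed {k : ℕ} {b : Bool} : (k, b) ∈ p → Red p (.app .gen (numeral k)) (ofBool b)
  | ctx {e e' : Tm} (E : Ctx) : Red p e e' → Red p (E.fill e) (E.fill e')

/-- Multi-step reduction `t →*_p u`. -/
def Reds (p : Cond) : Tm → Tm → Prop := Relation.ReflTransGen (Red p)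

def Ctx.comp : Ctx → Ctx → Ctx
  | .hole, F => F
  | .appL E u, F => .appL (E.comp F) u
  | .fst E, F => .fst (E.comp F)
  | .snd E, F => .snd (E.comp F)
  | .suc E, F => .suc (E.comp F)
  | .genApp E, F => .genApp (E.comp F)
  | .rec0Arg C E, F => .rec0Arg C (E.comp F)
  | .rec1Arg C a E, F => .rec1Arg C a (E.comp F)
  | .rec2Arg C a b E, F => .rec2Arg C a b (E.comp F)
  | .recNArg C cz g E, F => .recNArg C cz g (E.comp F)

theorem Ctx.fill_comp (E F : Ctx) (t : Tm) :
    (E.comp F).fill t = E.fill (F.fill t) := by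
  induction E <;> simp [Ctx.comp, Ctx.fill, *]

/-- If `q ≤ p` and `t →_q u`, then either `t →_p u`, or `t = E[f m̄]` for some
evaluation context `E` and some `m ∈ dom q \ dom p`. -/
theorem stmt10 (p q : Cond) (hq : IsFunc q) (hpq : p ⊆ q) (t u : Tm)
    (h : Red q t u) :
    Red p t u ∨
      ∃ (E : Ctx) (m : ℕ), t = E.fill (.app .gen (numeral m)) ∧
        m ∈ condDom q ∧ m ∉ condDom p := by
  induction h with
  | base hs => exact Or.inl (Red.base hs)
  | @genRed k b hk =>
    by_cases hkp : k ∈ condDom p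
    · left
      obtain ⟨⟨k', b'⟩, hmem, hk'⟩ := Finset.mem_image.mp hkp
      cases hk'
      have : b' = b := hq _ (hpq hmem) _ hk rfl
      subst this
      exact Red.genRed hmem
    · right
      exact ⟨.hole, k, rfl, Finset.mem_image.mpr ⟨(k, b), hk, rfl⟩, hkp⟩
  | ctx E _ ih =>
    rcases ih with h | ⟨F, m, rfl, hmq, hmp⟩
    · exact Or.inl (Red.ctx E h)
    · exact Or.inr ⟨E.comp F, m, (Ctx.fill_comp E F _).symm, hmq, hmp⟩
end
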